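/- arXiv:1912.12212 — 2 statements merged into one kernel-verified Lean document; each statement's English description precedes it below -/
import Mathlib

section
/- Let A, B, M be n×n complex matrices and let a, b be complex scalars with a·b ≠ 1. If A^n = a·I and B^n = b·I (i.e., A is a-potent and B is b-potent), then M = (1/(1 − a·b)) · Σ_{i=0}^{n−1} A^i · Δ_{A,B}[M] · B^i. -/
/-! The sum telescopes to `M - Aⁿ M Bⁿ`, which for `a`- and `b`-potent `A`, `B` is
`(1 - a b) M`. -/

/-- The Stein displacement operator `Δ_{A,B}[M] = M - A·M·B`. -/
noncomputable def steinDisplacement {n : ℕ} (A B M : Matrix (Fin n) (Fin n) ℂ) :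
    Matrix (Fin n) (Fin n) ℂ := M - A * M * B

theorem sum_pow_mul_sub_mul_mul_pow {R : Type*} [Ring R] (A B M : R) (n : ℕ) :
    ∑ i ∈ Finset.range n, A ^ i * (M - A * M * B) * B ^ i = M - A ^ n * M * B ^ n := by
  have telescope := Finset.sum_range_sub' (fun i => A ^ i * M * B ^ i) n
  simp only [pow_zero, one_mul, mul_one] at telescope
  rw [← telescope]
  refine Finset.sum_congr rfl fun i _ => ?_
  rw [pow_succ A i, pow_succ' B i]
  simp only [mul_sub, sub_mul, mul_assoc]

theorem sub_smul_one_mul_mul_smul_one {𝕜 R : Type*} [CommRing 𝕜] [Ring R] [Algebra 𝕜 R]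
    (a b : 𝕜) (M : R) : M - (a • 1 : R) * M * (b • 1) = (1 - a * b) • M := by
  rw [smul_one_mul, mul_smul_one, smul_smul, mul_comm b a, sub_smul, one_smul]

/-- If `A` is `a`-potent (`A^n = a·I`), `B` is `b`-potent (`B^n = b·I`) and `a·b ≠ 1`, then
`M = (1/(1 − a·b)) · Σ_{i=0}^{n−1} A^i · Δ_{A,B}[M] · B^i`. -/
theorem stein_inversion (n : ℕ) (A B M : Matrix (Fin n) (Fin n) ℂ) (a b : ℂ)
    (hab : a * b ≠ 1)
    (hA : A ^ n = a • (1 : Matrix (Fin n) (Fin n) ℂ))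
    (hB : B ^ n = b • (1 : Matrix (Fin n) (Fin n) ℂ)) :
    M = (1 / (1 - a * b)) •
      ∑ i ∈ Finset.range n, A ^ i * steinDisplacement A B M * B ^ i := by
  have hab' : 1 - a * b ≠ 0 := sub_ne_zero.mpr hab.symm
  rw [steinDisplacement, sum_pow_mul_sub_mul_mul_pow, hA, hB, sub_smul_one_mul_mul_smul_one,
    smul_smul, one_div_mul_cancel hab', one_smul]
end

section
/- Let M ∈ ℂ^{n×n}, let e, f be real scalars with e ≠ f and e ≠ 0, and suppose the Sylvester displacement of M factors as ∇_{Z_e,Z_f}[M] = G·Hᵀ where G = [g_1 … g_r] and H = [h_1 … h_r] are n×r complex matrices with columns g_j and h_j. Then M = (1/(e − f)) · Σ_{j=1}^{r} Z_e(g_j) · Z_f(J·h_j). -/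
open Matrix

/-- The `n × n` unit `f`-circulant matrix `Z_f`: entries `(Z_f)_{i,k} = 1` if `i = k+1`,
`(Z_f)_{0,n−1} = f`, and `0` otherwise. -/
noncomputable def Zf (n : ℕ) (f : ℝ) : Matrix (Fin n) (Fin n) ℂ :=
  Matrix.of fun i k =>
    if (i : ℕ) = (k : ℕ) + 1 then 1
    else if (i : ℕ) = 0 ∧ (k : ℕ) = n - 1 then (f : ℂ)
    else 0

/-- The `n × n` reversal matrix `J`: entries `J_{i,k} = 1` if `i + k = n − 1`, else `0`. -/
noncomputable def Jrev (n : ℕ) : Matrix (Fin n) (Fin n) ℂ :=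
  Matrix.of fun i k => if (i : ℕ) + (k : ℕ) = n - 1 then 1 else 0

/-- The `f`-circulant matrix `Z_f(v)` generated by a vector `v ∈ ℂ^n`:
`(Z_f(v))_{i,k} = v_{i−k}` if `i ≥ k`, and `(Z_f(v))_{i,k} = f · v_{n+i−k}` if `i < k`. -/
noncomputable def ZfVec (n : ℕ) (f : ℝ) (v : Fin n → ℂ) : Matrix (Fin n) (Fin n) ℂ :=
  Matrix.of fun i k =>
    (if (k : ℕ) ≤ (i : ℕ) then 1 else (f : ℂ)) *
      v ⟨((i : ℕ) + n - (k : ℕ)) % n, Nat.mod_lt _ i.pos⟩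

/-!
`Z_f(v) = ∑ₘ vₘ Z_fᵐ` is a polynomial in `Z_f`, so it commutes with `Z_f`. Hence
`∇[Z_e(g) Z_f(J h)] = Z_e(g) (Z_e - Z_f) Z_f(J h) = (e - f) g hᵀ`, because
`Z_e - Z_f = (e - f) e₀ eₙ₋₁ᵀ`, the first column of `Z_e(g)` is `g` and the last row of
`Z_f(J h)` is `h`. Summing over `j`, the right-hand side has the same displacement `G Hᵀ`
as `M`. Finally `∇` is injective for `e ≠ f`: `Z_e Y = Y Z_f` gives `Z_eⁿ Y = Y Z_fⁿ`, that is
`e Y = f Y`, since `Z_fⁿ = f I`.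
-/

section

variable {n : ℕ}

theorem Zf_mul_apply (f : ℝ) (A : Matrix (Fin n) (Fin n) ℂ) (i k : Fin n) :
    (Zf n f * A) i k =
      if (i : ℕ) = 0 then (f : ℂ) * A ⟨n - 1, Nat.sub_one_lt i.pos.ne'⟩ k
      else A ⟨(i : ℕ) - 1, by omega⟩ k := by
  rw [mul_apply]
  split_ifs with hi
  · rw [Fintype.sum_eq_single ⟨n - 1, Nat.sub_one_lt i.pos.ne'⟩]
    · rw [Zf, of_apply, if_neg (by omega), if_pos ⟨hi, rfl⟩]
    · intro j hj
      have hj' : (j : ℕ) ≠ n - 1 := fun h => hj (Fin.ext h)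
      rw [Zf, of_apply, if_neg (by omega), if_neg (by omega), zero_mul]
  · rw [Fintype.sum_eq_single ⟨(i : ℕ) - 1, by omega⟩]
    · rw [Zf, of_apply, if_pos (by dsimp only; omega), one_mul]
    · intro j hj
      have hj' : (j : ℕ) ≠ (i : ℕ) - 1 := fun h => hj (Fin.ext h)
      rw [Zf, of_apply, if_neg (by omega), if_neg (by omega), zero_mul]

theorem Zf_pow_apply (f : ℝ) {m : ℕ} (hm : m ≤ n) (i k : Fin n) :
    (Zf n f ^ m) i k =
      if (k : ℕ) + m = i then 1 else if (i : ℕ) + n = k + m then (f : ℂ) else 0 := by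
  induction m generalizing i with
  | zero =>
    simp only [pow_zero, one_apply, Fin.ext_iff]
    split_ifs <;> first | rfl | omega
  | succ m ih =>
    rw [pow_succ', Zf_mul_apply]
    split_ifs <;> simp only [ih (by omega)] <;> split_ifs <;> first | (exfalso; omega) | ring1

theorem Zf_pow_self (f : ℝ) : Zf n f ^ n = (f : ℂ) • 1 := by
  ext i k
  simp only [Zf_pow_apply f le_rfl, Matrix.smul_apply, one_apply, Fin.ext_iff]
  split_ifs <;> first | (exfalso; omega) | simp

theorem add_add_sub_mod_cases {i k : ℕ} (hi : i < n) (hk : k < n) :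
    k ≤ i ∧ k + (i + n - k) % n = i ∨ i < k ∧ k + (i + n - k) % n = i + n := by
  by_cases hki : k ≤ i
  · left
    rw [show i + n - k = i - k + n by omega, Nat.add_mod_right, Nat.mod_eq_of_lt (by omega)]
    omega
  · right
    rw [Nat.mod_eq_of_lt (by omega)]
    omega

theorem ZfVec_eq_sum_smul_Zf_pow (f : ℝ) (v : Fin n → ℂ) :
    ZfVec n f v = ∑ m : Fin n, v m • Zf n f ^ (m : ℕ) := by
  ext i k
  have hpow (m : Fin n) := Zf_pow_apply f m.is_lt.le i k
  simp only [ZfVec, of_apply, Matrix.sum_apply, Matrix.smul_apply, hpow, smul_eq_mul]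
  rw [Fintype.sum_eq_single ⟨((i : ℕ) + n - k) % n, Nat.mod_lt _ i.pos⟩]
  · rcases add_add_sub_mod_cases i.is_lt k.is_lt with ⟨hki, h⟩ | ⟨hik, h⟩
    · rw [if_pos hki, if_pos h, mul_one, one_mul]
    · rw [if_neg (by omega), if_neg (by omega), if_pos h.symm, mul_comm]
  · intro m hm
    have hm' : (m : ℕ) ≠ ((i : ℕ) + n - k) % n := fun h => hm (Fin.ext h)
    have := m.is_lt
    rcases add_add_sub_mod_cases i.is_lt k.is_lt with ⟨_, h⟩ | ⟨_, h⟩ <;>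
      rw [if_neg (by omega), if_neg (by omega), mul_zero]

theorem commute_Zf_ZfVec (f : ℝ) (v : Fin n → ℂ) : Commute (Zf n f) (ZfVec n f v) := by
  rw [ZfVec_eq_sum_smul_Zf_pow]
  exact Commute.sum_right _ _ _ fun m _ => ((Commute.refl _).pow_right _).smul_right _

theorem SemiconjBy.eq_zero_of_pow_eq_smul_one {K R : Type*} [Field K] [Ring R] [Algebra K R]
    {Y A B : R} {a b : K} {m : ℕ} (h : SemiconjBy Y B A) (hA : A ^ m = a • 1)
    (hB : B ^ m = b • 1) (hab : a ≠ b) : Y = 0 := by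
  have hm : Y * B ^ m = A ^ m * Y := (h.pow_right m).eq
  rw [hA, hB, mul_smul_comm, smul_mul_assoc, mul_one, one_mul] at hm
  have : (a - b) • Y = 0 := by rw [sub_smul, hm, sub_self]
  exact (smul_eq_zero.mp this).resolve_left (sub_ne_zero.mpr hab)

theorem Zf_displacement_injective {e f : ℝ} (hef : e ≠ f) :
    Function.Injective fun X : Matrix (Fin n) (Fin n) ℂ => Zf n e * X - X * Zf n f := by
  intro X Y hXY
  rw [← sub_eq_zero]
  refine SemiconjBy.eq_zero_of_pow_eq_smul_one (m := n) ?_ (Zf_pow_self e) (Zf_pow_self f)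
    (by exact_mod_cast hef)
  rw [SemiconjBy, mul_sub, sub_mul]
  exact (sub_eq_sub_iff_sub_eq_sub.mp hXY).symm

theorem Zf_sub_Zf (hn : 0 < n) (e f : ℝ) :
    Zf n e - Zf n f = ((e : ℂ) - f) •
      vecMulVec (Pi.single ⟨0, hn⟩ 1) (Pi.single ⟨n - 1, Nat.sub_one_lt hn.ne'⟩ 1) := by
  ext i k
  simp only [Zf, Matrix.sub_apply, of_apply, Matrix.smul_apply, vecMulVec_apply, Pi.single_apply,
    Fin.ext_iff, smul_eq_mul]
  split_ifs <;> first | (exfalso; omega) | simp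

theorem col_ZfVec_zero (hn : 0 < n) (f : ℝ) (v : Fin n → ℂ) :
    (ZfVec n f v).col ⟨0, hn⟩ = v := by
  ext i
  simp only [ZfVec, col_apply, of_apply, if_pos (Nat.zero_le _), one_mul]
  congr 1
  ext
  show ((i : ℕ) + n - 0) % n = i
  rw [Nat.sub_zero, Nat.add_mod_right, Nat.mod_eq_of_lt i.is_lt]

theorem row_ZfVec_last (hn : 0 < n) (f : ℝ) (v : Fin n → ℂ) :
    (ZfVec n f v).row ⟨n - 1, Nat.sub_one_lt hn.ne'⟩ = fun k => v k.rev := by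
  ext k
  simp only [ZfVec, row_apply, of_apply, if_pos (Nat.le_sub_one_of_lt k.is_lt), one_mul]
  congr 1
  ext
  show (n - 1 + n - k) % n = n - (k + 1)
  rw [show n - 1 + n - k = n - (k + 1) + n by omega, Nat.add_mod_right,
    Nat.mod_eq_of_lt (by omega)]

theorem Jrev_mulVec (v : Fin n → ℂ) : Jrev n *ᵥ v = fun i => v i.rev := by
  ext i
  rw [mulVec, dotProduct, Fintype.sum_eq_single i.rev]
  · rw [Jrev, of_apply, if_pos (by rw [Fin.val_rev]; omega), one_mul]
  · intro j hj
    rw [Ne, Fin.ext_iff, Fin.val_rev] at hj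
    rw [Jrev, of_apply, if_neg (by omega), zero_mul]

theorem mul_transpose_eq_sum_vecMulVec {l m ι α : Type*} [Fintype ι]
    [NonUnitalNonAssocSemiring α]
    (G : Matrix l ι α) (H : Matrix m ι α) :
    G * Hᵀ = ∑ j, vecMulVec (fun i => G i j) (fun k => H k j) := by
  ext i k
  simp [mul_apply, Matrix.sum_apply, vecMulVec_apply]

theorem Zf_displacement_ZfVec_mul_ZfVec_Jrev (e f : ℝ) (g h : Fin n → ℂ) :
    Zf n e * (ZfVec n e g * ZfVec n f (Jrev n *ᵥ h)) -
        ZfVec n e g * ZfVec n f (Jrev n *ᵥ h) * Zf n f = ((e : ℂ) - f) • vecMulVec g h := by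
  rcases n.eq_zero_or_pos with rfl | hn
  · exact Subsingleton.elim _ _
  set A := ZfVec n e g
  set B := ZfVec n f (Jrev n *ᵥ h)
  calc Zf n e * (A * B) - A * B * Zf n f = A * ((Zf n e - Zf n f) * B) := by
        rw [← mul_assoc, (commute_Zf_ZfVec e g).eq, mul_assoc, mul_assoc,
          ← (commute_Zf_ZfVec f _).eq, ← mul_sub, ← sub_mul]
    _ = ((e : ℂ) - f) • vecMulVec (A.col ⟨0, hn⟩) (B.row ⟨n - 1, Nat.sub_one_lt hn.ne'⟩) := by
        rw [Zf_sub_Zf hn, smul_mul_assoc, mul_smul_comm, vecMulVec_mul, mul_vecMulVec,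
          mulVec_single_one, single_one_vecMul]
    _ = ((e : ℂ) - f) • vecMulVec g h := by
        rw [col_ZfVec_zero hn, row_ZfVec_last hn, Jrev_mulVec]
        simp only [Fin.rev_rev]

end

theorem sylvester_rank_decomposition_general (n r : ℕ) (M : Matrix (Fin n) (Fin n) ℂ) (e f : ℝ)
    (hef : e ≠ f) (G H : Matrix (Fin n) (Fin r) ℂ)
    (hM : Zf n e * M - M * Zf n f = G * Hᵀ) :
    M = (1 / ((e : ℂ) - (f : ℂ))) •
      ∑ j : Fin r,
        ZfVec n e (fun i => G i j) * ZfVec n f ((Jrev n).mulVec fun i => H i j) := by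
  have hc : (e : ℂ) - f ≠ 0 := sub_ne_zero.mpr (by exact_mod_cast hef)
  set S := ∑ j : Fin r,
    ZfVec n e (fun i => G i j) * ZfVec n f ((Jrev n).mulVec fun i => H i j)
  have hS : Zf n e * S - S * Zf n f = ((e : ℂ) - f) • (G * Hᵀ) := by
    rw [mul_transpose_eq_sum_vecMulVec, Finset.smul_sum, Finset.mul_sum, Finset.sum_mul,
      ← Finset.sum_sub_distrib]
    exact Finset.sum_congr rfl fun j _ => Zf_displacement_ZfVec_mul_ZfVec_Jrev e f _ _
  refine Zf_displacement_injective hef ?_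
  beta_reduce
  rw [hM, mul_smul_comm, smul_mul_assoc, ← smul_sub, hS, smul_smul, one_div,
    inv_mul_cancel₀ hc, one_smul]

/-- Sylvester-type displacement inversion: if ∇_{Z_e,Z_f}[M] = G·Hᵀ with e ≠ f and e ≠ 0,
then M = (1/(e − f)) · Σ_{j=1}^{r} Z_e(g_j) · Z_f(J·h_j). -/
theorem sylvester_rank_decomposition (n r : ℕ) (M : Matrix (Fin n) (Fin n) ℂ) (e f : ℝ)
    (hef : e ≠ f) (he : e ≠ 0) (G H : Matrix (Fin n) (Fin r) ℂ)
    (hM : Zf n e * M - M * Zf n f = G * Hᵀ) :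
    M = (1 / ((e : ℂ) - (f : ℂ))) •
      ∑ j : Fin r,
        ZfVec n e (fun i => G i j) * ZfVec n f ((Jrev n).mulVec fun i => H i j) :=
  sylvester_rank_decomposition_general n r M e f hef G H hM
end
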